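/- arXiv:1603.06164 — 8 statements merged into one kernel-verified Lean document; each statement's English description precedes it below -/
import Mathlib

section
/- If A is a finite subset of a field of characteristic 2 with A not contained in {0}, then there exists an odd positive integer k with k ≤ |A| such that the sum over x in A of x^k is nonzero. -/
theorem power_sum_nonzero_odd_exponent {F : Type*} [Field F] [CharP F 2]
    (A : Finset F) (hA : ¬ (A : Set F) ⊆ {0}) :
    ∃ k : ℕ, Odd k ∧ 0 < k ∧ k ≤ A.card ∧ ∑ x ∈ A, x ^ k ≠ 0 := by
  by_contra hcon
  push_neg at hcon
  -- hcon : ∀ k, Odd k → 0 < k → k ≤ A.card → ∑ x ∈ A, x ^ k = 0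
  obtain ⟨x0, hx0A, hx0⟩ : ∃ x ∈ A, x ≠ 0 := by
    by_contra h
    push_neg at h
    exact hA fun x hx => h x hx
  classical
  set B := A.erase (0 : F) with hBdef
  have hx0B : x0 ∈ B := Finset.mem_erase.mpr ⟨hx0, hx0A⟩
  have hcard : B.card ≤ A.card := Finset.card_erase_le
  -- power sums over B equal power sums over A for positive exponents
  have hsumBA : ∀ k : ℕ, 0 < k → ∑ x ∈ B, x ^ k = ∑ x ∈ A, x ^ k := by
    intro k hk
    exact Finset.sum_erase _ (by simp [zero_pow hk.ne'])
  -- all power sums over B with 1 ≤ k ≤ B.card vanish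
  have hBzero : ∀ k : ℕ, 0 < k → k ≤ B.card → ∑ x ∈ B, x ^ k = 0 := by
    intro k
    induction k using Nat.strong_induction_on with
    | _ k ih =>
      intro hk hkc
      rcases Nat.even_or_odd k with he | ho
      · obtain ⟨l, hl⟩ := he
        have hl2 : k = 2 * l := by omega
        have hlpos : 0 < l := by omega
        have hll : l < k := by omega
        have : ∑ x ∈ B, x ^ k = (∑ x ∈ B, x ^ l) ^ 2 := by
          rw [CharTwo.sum_sq]
          refine Finset.sum_congr rfl fun x _ => ?_
          rw [← pow_mul, hl2, mul_comm]
        rw [this, ih l hll hlpos (le_trans hll.le hkc)]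
        simp
      · rw [hsumBA k hk]
        exact hcon k ho hk (le_trans hkc hcard)
  -- enumerate B
  set m := B.card with hm
  have hmpos : 0 < m := Finset.card_pos.mpr ⟨x0, hx0B⟩
  set e := B.equivFin with he
  set a : Fin m → F := fun i => ((e.symm i : B) : F) with ha
  have ha_inj : Function.Injective a :=
    Subtype.coe_injective.comp e.symm.injective
  have ha_ne : ∀ i, a i ≠ 0 := fun i =>
    (Finset.mem_erase.mp (e.symm i).2).1
  have ha_sum : ∀ k : ℕ, ∑ i, a i ^ k = ∑ x ∈ B, x ^ k := by
    intro k
    rw [← Finset.sum_coe_sort B (fun x => x ^ k)]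
    exact Equiv.sum_comp e.symm (fun b => ((b : F)) ^ k)
  -- the matrix
  set M : Matrix (Fin m) (Fin m) F :=
    Matrix.of (fun i j : Fin m => a i ^ ((j : ℕ) + 1)) with hM
  have hMfact : M = Matrix.diagonal a * Matrix.vandermonde a := by
    ext i j
    rw [Matrix.diagonal_mul]
    simp [hM, Matrix.vandermonde, pow_succ, mul_comm]
  have hdet : M.det ≠ 0 := by
    rw [hMfact, Matrix.det_mul, Matrix.det_diagonal]
    exact mul_ne_zero (Finset.prod_ne_zero_iff.mpr fun i _ => ha_ne i)
      (Matrix.det_vandermonde_ne_zero_iff.mpr ha_inj)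
  have hker : M.transpose.mulVec (fun _ => (1 : F)) = 0 := by
    funext j
    have : ∑ i, a i ^ ((j : ℕ) + 1) = 0 := by
      rw [ha_sum]
      exact hBzero _ (Nat.succ_pos _) (Nat.succ_le_of_lt j.2)
    simpa [Matrix.mulVec, dotProduct, hM] using this
  have hdetT : M.transpose.det ≠ 0 := by rwa [Matrix.det_transpose]
  have h1 : (fun _ => (1 : F)) = (0 : Fin m → F) :=
    Matrix.eq_zero_of_mulVec_eq_zero hdetT hker
  have := congrFun h1 ⟨0, hmpos⟩
  simp at this
end

section
/- Let q = 2^m and d ≥ 1. For each ξ in the finite field F_q define v_ξ = (ξ, ξ³, …, ξ^{2d−1}) ∈ (F_q)^d. Then for every nonempty subset A of the nonzero elements of F_q with |A| ≤ 2d, the sum over ξ ∈ A of v_ξ is nonzero. -/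
theorem sum_odd_power_vectors_ne_zero {m d : ℕ} (hm : 0 < m) (hd : 0 < d)
    {F : Type*} [Field F] [Fintype F] (hF : Fintype.card F = 2 ^ m)
    (A : Finset F) (hA0 : ∀ ξ ∈ A, ξ ≠ 0) (hAne : A.Nonempty)
    (hAcard : A.card ≤ 2 * d) :
    (∑ ξ ∈ A, (fun i : Fin d => ξ ^ (2 * (i : ℕ) + 1))) ≠ 0 := by
  -- characteristic 2
  have hchar2 : CharP F 2 := by
    obtain ⟨n, hp, hcard⟩ := FiniteField.card F (ringChar F)
    have h2 : ringChar F = 2 := by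
      have : ringChar F ∣ 2 ^ m := by
        rw [← hF, hcard]; exact dvd_pow_self _ (by positivity)
      have := (Nat.Prime.dvd_of_dvd_pow hp this)
      exact (Nat.prime_dvd_prime_iff_eq hp Nat.prime_two).mp this
    rw [← h2]; exact ringChar.charP F
  haveI := hchar2
  haveI : Fact (Nat.Prime 2) := ⟨Nat.prime_two⟩
  intro h
  -- all power sums p_k vanish for 1 ≤ k ≤ 2d
  have hp : ∀ k, 0 < k → k ≤ 2 * d → ∑ ξ ∈ A, ξ ^ k = 0 := by
    intro k
    induction k using Nat.strong_induction_on with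
    | _ k ih =>
      intro hk0 hk2d
      rcases Nat.even_or_odd k with ⟨j, rfl⟩ | ⟨i, rfl⟩
      · have hj : ∑ ξ ∈ A, ξ ^ j = 0 := ih j (by omega) (by omega) (by omega)
        have := sum_pow_char (p := 2) A (fun ξ => ξ ^ j)
        rw [hj] at this
        have h2 : ∀ ξ : F, (ξ ^ j) ^ 2 = ξ ^ (j + j) := fun ξ => by
          rw [← pow_mul]; ring_nf
        rw [Finset.sum_congr rfl (fun ξ _ => h2 ξ)] at this
        rw [← this, zero_pow]; omega
      · have hi : i < d := by omega
        have := congrFun h ⟨i, hi⟩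
        simpa using this
  -- Vandermonde argument
  set n := A.card with hn
  have hn0 : 0 < n := Finset.card_pos.mpr hAne
  let g : Fin n → F := fun i => (A.equivFin.symm i : F)
  have hgmem : ∀ i, g i ∈ A := fun i => (A.equivFin.symm i).2
  have hginj : Function.Injective g := fun i j hij => by
    have := Subtype.ext hij
    exact A.equivFin.symm.injective this
  let M : Matrix (Fin n) (Fin n) F := Matrix.of fun i j => g i ^ ((j : ℕ) + 1)
  have hM : M = Matrix.diagonal g * Matrix.vandermonde g := by
    ext i j
    simp [M, Matrix.diagonal_mul, Matrix.vandermonde, pow_succ, mul_comm]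
  have hdet : M.det ≠ 0 := by
    rw [hM, Matrix.det_mul, Matrix.det_diagonal, Matrix.det_vandermonde]
    apply mul_ne_zero
    · exact Finset.prod_ne_zero_iff.mpr fun i _ => hA0 _ (hgmem i)
    · refine Finset.prod_ne_zero_iff.mpr fun i _ => Finset.prod_ne_zero_iff.mpr fun j hj => ?_
      rw [Finset.mem_Ioi] at hj
      exact sub_ne_zero.mpr fun e => absurd (hginj e) (Fin.ne_of_gt hj)
  have hvm : Matrix.vecMul (fun _ : Fin n => (1 : F)) M = 0 := by
    funext j
    have hsum : ∑ i : Fin n, g i ^ ((j : ℕ) + 1) = ∑ ξ ∈ A, ξ ^ ((j : ℕ) + 1) := by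
      rw [← Finset.sum_coe_sort A (fun ξ => ξ ^ ((j : ℕ) + 1))]
      exact Fintype.sum_equiv A.equivFin.symm _ _ (fun i => rfl)
    have : (j : ℕ) + 1 ≤ 2 * d := by
      have := j.2; omega
    simp only [Matrix.vecMul, dotProduct, one_mul, Pi.zero_apply]
    simpa [M, hsum] using hp ((j : ℕ) + 1) (by omega) this
  have hunit : IsUnit M.det := isUnit_iff_ne_zero.mpr hdet
  have h1 : (fun _ : Fin n => (1 : F)) = 0 := by
    have := congrArg (fun v => Matrix.vecMul v M⁻¹) hvm
    simpa [Matrix.vecMul_vecMul, Matrix.mul_nonsing_inv M hunit, Matrix.zero_vecMul]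
      using this
  have := congrFun h1 ⟨0, hn0⟩
  simp at this
end

section
/- Let q = 2^m and d ≥ 1, and for ξ ∈ F_q let v_ξ = (ξ, ξ³, …, ξ^{2d−1}) ∈ (F_q)^d. If S and T are two distinct subsets of F_q^× each of size at most d, then ∑_{ξ∈S} v_ξ ≠ ∑_{ξ∈T} v_ξ. -/
open Finset Polynomial

private lemma char_two_of_card {F : Type*} [Field F] [Fintype F] {m : ℕ} (hm : 0 < m)
    (hF : Fintype.card F = 2 ^ m) : CharP F 2 := by
  have h := ringChar.charP F
  obtain ⟨n, hp, hcard⟩ := FiniteField.card F (ringChar F)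
  have hdvd : ringChar F ∣ 2 ^ m := by
    rw [← hF, hcard]; exact dvd_pow_self _ n.pos.ne'
  have h2 : ringChar F = 2 :=
    (Nat.prime_dvd_prime_iff_eq hp Nat.prime_two).mp (hp.dvd_of_dvd_pow hdvd)
  rwa [h2] at h

private lemma power_sums_zero {F : Type*} [Field F] [CharP F 2] {d : ℕ}
    (U : Finset F) (h : ∀ i < d, ∑ ξ ∈ U, ξ ^ (2 * i + 1) = 0) :
    ∀ k, 1 ≤ k → k ≤ 2 * d → ∑ ξ ∈ U, ξ ^ k = 0 := by
  intro k
  induction k using Nat.strong_induction_on with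
  | _ k ih =>
    intro hk1 hk2
    rcases Nat.even_or_odd k with ⟨j, hj⟩ | ⟨i, hi⟩
    · have hj1 : 1 ≤ j := by omega
      have hj2 : j ≤ 2 * d := by omega
      have hjk : j < k := by omega
      have := ih j hjk hj1 hj2
      have hfr : (∑ ξ ∈ U, ξ ^ j) ^ 2 = ∑ ξ ∈ U, (ξ ^ j) ^ 2 := sum_pow_char 2 U _
      rw [this, zero_pow (by norm_num)] at hfr
      rw [show k = j * 2 by omega]
      simpa [pow_mul] using hfr.symm
    · have hid : i < d := by omega
      have := h i hid
      rwa [show 2 * i + 1 = k by omega] at this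

theorem sums_of_odd_power_vectors_distinct {m d : ℕ} (hm : 0 < m) (hd : 0 < d)
    {F : Type*} [Field F] [Fintype F] (hF : Fintype.card F = 2 ^ m)
    (S T : Finset F) (hS0 : ∀ ξ ∈ S, ξ ≠ 0) (hT0 : ∀ ξ ∈ T, ξ ≠ 0)
    (hS : S.card ≤ d) (hT : T.card ≤ d) (hST : S ≠ T) :
    (∑ ξ ∈ S, (fun i : Fin d => ξ ^ (2 * (i : ℕ) + 1))) ≠
      ∑ ξ ∈ T, (fun i : Fin d => ξ ^ (2 * (i : ℕ) + 1)) := by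
  haveI : CharP F 2 := char_two_of_card hm hF
  classical
  intro heq
  -- coordinatewise equality
  have hcoord : ∀ i < d, ∑ ξ ∈ S, ξ ^ (2 * i + 1) = ∑ ξ ∈ T, ξ ^ (2 * i + 1) := by
    intro i hi
    have := congrFun heq ⟨i, hi⟩
    simpa [Finset.sum_apply] using this
  -- symmetric difference
  set U : Finset F := (S \ T) ∪ (T \ S) with hU
  have hUne : U.Nonempty := by
    rw [Finset.nonempty_iff_ne_empty]
    intro h0
    rw [Finset.union_eq_empty] at h0
    exact hST (Finset.Subset.antisymm (Finset.sdiff_eq_empty_iff_subset.mp h0.1)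
      (Finset.sdiff_eq_empty_iff_subset.mp h0.2))
  have hU0 : ∀ ξ ∈ U, ξ ≠ 0 := by
    intro ξ hξ
    rcases Finset.mem_union.mp hξ with h | h
    · exact hS0 ξ (Finset.mem_sdiff.mp h).1
    · exact hT0 ξ (Finset.mem_sdiff.mp h).1
  have hUcard : U.card ≤ 2 * d := by
    rw [hU]
    have := Finset.card_union_le (S \ T) (T \ S)
    have h1 : (S \ T).card ≤ S.card := Finset.card_le_card (Finset.sdiff_subset)
    have h2 : (T \ S).card ≤ T.card := Finset.card_le_card (Finset.sdiff_subset)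
    omega
  -- sums over U vanish for odd exponents
  have hUsum : ∀ i < d, ∑ ξ ∈ U, ξ ^ (2 * i + 1) = 0 := by
    intro i hi
    have hdisj : Disjoint (S \ T) (T \ S) := disjoint_sdiff_sdiff
    have hS' : ∑ ξ ∈ S \ T, ξ ^ (2 * i + 1) + ∑ ξ ∈ S ∩ T, ξ ^ (2 * i + 1)
        = ∑ ξ ∈ S, ξ ^ (2 * i + 1) := by
      rw [← Finset.sdiff_inter_self_left S T]
      exact Finset.sum_sdiff Finset.inter_subset_left
    have hT' : ∑ ξ ∈ T \ S, ξ ^ (2 * i + 1) + ∑ ξ ∈ S ∩ T, ξ ^ (2 * i + 1)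
        = ∑ ξ ∈ T, ξ ^ (2 * i + 1) := by
      rw [Finset.inter_comm S T, ← Finset.sdiff_inter_self_left T S]
      exact Finset.sum_sdiff Finset.inter_subset_left
    have hab : ∑ ξ ∈ S \ T, ξ ^ (2 * i + 1) = ∑ ξ ∈ T \ S, ξ ^ (2 * i + 1) := by
      have := hcoord i hi
      rw [← hS', ← hT'] at this
      exact add_right_cancel this
    rw [hU, Finset.sum_union hdisj, hab, CharTwo.add_self_eq_zero]
  -- all power sums up to 2d vanish
  have hall : ∀ k, 1 ≤ k → k ≤ 2 * d → ∑ ξ ∈ U, ξ ^ k = 0 :=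
    power_sums_zero U hUsum
  -- Lagrange interpolation contradiction
  obtain ⟨ξ₀, hξ₀⟩ := hUne
  set n := U.card with hn
  have hn1 : 1 ≤ n := Finset.card_pos.mpr ⟨ξ₀, hξ₀⟩
  set P : F[X] := Lagrange.basis U id ξ₀ with hP
  have hinj : Set.InjOn (id : F → F) U := Function.injective_id.injOn
  have hdeg : P.natDegree = n - 1 := Lagrange.natDegree_basis hinj hξ₀
  have hdeg' : P.natDegree < n := by omega
  have hcontra : ∑ ξ ∈ U, ξ * P.eval ξ = ξ₀ := by
    rw [Finset.sum_eq_single ξ₀]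
    · rw [show P.eval ξ₀ = 1 from Lagrange.eval_basis_self hinj hξ₀, mul_one]
    · intro b hb hbne
      have h0 : P.eval (id b) = 0 := Lagrange.eval_basis_of_ne hbne.symm hb
      simp only [id] at h0
      rw [h0, mul_zero]
    · intro h; exact absurd hξ₀ h
  have hzero : ∑ ξ ∈ U, ξ * P.eval ξ = 0 := by
    have : ∀ ξ : F, P.eval ξ = ∑ j ∈ Finset.range n, P.coeff j * ξ ^ j := fun ξ =>
      eval_eq_sum_range' hdeg' ξ
    calc ∑ ξ ∈ U, ξ * P.eval ξ
        = ∑ ξ ∈ U, ∑ j ∈ Finset.range n, P.coeff j * ξ ^ (j + 1) := by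
          refine Finset.sum_congr rfl fun ξ _ => ?_
          rw [this ξ, Finset.mul_sum]
          exact Finset.sum_congr rfl fun j _ => by ring
      _ = ∑ j ∈ Finset.range n, P.coeff j * ∑ ξ ∈ U, ξ ^ (j + 1) := by
          rw [Finset.sum_comm]
          exact Finset.sum_congr rfl fun j _ => by rw [Finset.mul_sum]
      _ = 0 := by
          refine Finset.sum_eq_zero fun j hj => ?_
          rw [hall (j + 1) (by omega) (by have := Finset.mem_range.mp hj; omega), mul_zero]
  exact hU0 ξ₀ hξ₀ (hcontra ▸ hzero)
end

section
/- For any positive integers d and m, the F₂-vector space F₂^{dm} contains a subset B of size at least 2^m − 1 that spans F₂^{dm} and such that every vector of F₂^{dm} has at most one representation as a sum of at most d distinct members of B. -/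
open Finset
open scoped symmDiff

section CharTwo

variable {V : Type*} [AddCommGroup V]

lemma char2_sum_symmDiff (h2 : ∀ v : V, v + v = 0) {ι : Type*} [DecidableEq ι]
    (S T : Finset ι) (f : ι → V) :
    ∑ i ∈ S ∆ T, f i = ∑ i ∈ S, f i + ∑ i ∈ T, f i := by
  have hst : S ∆ T = (S ∪ T) \ (S ∩ T) := by
    ext a; simp only [Finset.mem_symmDiff, Finset.mem_sdiff, Finset.mem_union,
      Finset.mem_inter]; tauto
  have h3 := Finset.sum_sdiff (f := f) (Finset.inter_subset_union (s := S) (t := T))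
  have h1 := Finset.sum_union_inter (s₁ := S) (s₂ := T) (f := f)
  rw [hst]
  calc ∑ i ∈ (S ∪ T) \ (S ∩ T), f i
      = ∑ i ∈ (S ∪ T) \ (S ∩ T), f i + (∑ i ∈ S ∩ T, f i + ∑ i ∈ S ∩ T, f i) := by
        rw [h2, add_zero]
    _ = (∑ i ∈ (S ∪ T) \ (S ∩ T), f i + ∑ i ∈ S ∩ T, f i) + ∑ i ∈ S ∩ T, f i := by
        rw [add_assoc]
    _ = ∑ i ∈ S ∪ T, f i + ∑ i ∈ S ∩ T, f i := by rw [h3]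
    _ = ∑ i ∈ S, f i + ∑ i ∈ T, f i := h1

lemma char2_sum_eq_iff (h2 : ∀ v : V, v + v = 0) {ι : Type*} [DecidableEq ι]
    (S T : Finset ι) (f : ι → V) :
    ∑ i ∈ S, f i = ∑ i ∈ T, f i ↔ ∑ i ∈ S ∆ T, f i = 0 := by
  rw [char2_sum_symmDiff h2]
  constructor
  · intro h; rw [h]; exact h2 _
  · intro h
    calc ∑ i ∈ S, f i = ∑ i ∈ S, f i + (∑ i ∈ T, f i + ∑ i ∈ T, f i) := by
          rw [h2, add_zero]
      _ = (∑ i ∈ S, f i + ∑ i ∈ T, f i) + ∑ i ∈ T, f i := by rw [add_assoc]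
      _ = ∑ i ∈ T, f i := by rw [h, zero_add]

lemma li_sum_eq_empty [Module (ZMod 2) V] {ι : Type*} [Fintype ι] [DecidableEq ι]
    {f : ι → V} (hf : LinearIndependent (ZMod 2) f) {I : Finset ι}
    (hI : ∑ i ∈ I, f i = 0) : I = ∅ := by
  have h := (Fintype.linearIndependent_iff.mp hf) (fun i => if i ∈ I then 1 else 0) ?_
  · ext i
    simp only [Finset.notMem_empty, iff_false]
    intro hi
    have := h i
    rw [if_pos hi] at this
    exact one_ne_zero this
  · rw [← hI]
    simp only [ite_smul, one_smul, zero_smul]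
    simp

end CharTwo

lemma moment_sum_unique {F : Type*} [Field F] [CharP F 2] {d : ℕ} (hd : 0 < d)
    (S T : Finset (Fin d → F))
    (hS : ∀ v ∈ S, ∃ x : F, x ≠ 0 ∧ v = fun i : Fin d => x ^ (2 * (i : ℕ) + 1))
    (hT : ∀ v ∈ T, ∃ x : F, x ≠ 0 ∧ v = fun i : Fin d => x ^ (2 * (i : ℕ) + 1))
    (hScard : S.card ≤ d) (hTcard : T.card ≤ d)
    (hsum : ∑ v ∈ S, v = ∑ v ∈ T, v) : S = T := by
  classical
  have h2 : ∀ v : Fin d → F, v + v = 0 := fun v => by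
    funext i; exact CharTwo.add_self_eq_zero _
  by_contra hne
  set U := S ∆ T with hU
  have hUne : U.Nonempty := by
    rw [Finset.nonempty_iff_ne_empty]
    intro h
    exact hne (symmDiff_eq_bot.mp (by rw [Finset.bot_eq_empty, ← h]))
  have hU0 : ∑ v ∈ U, v = 0 := by
    have := (char2_sum_eq_iff h2 S T id).mp hsum
    simpa using this
  have hUM : ∀ v ∈ U, ∃ x : F, x ≠ 0 ∧ v = fun i : Fin d => x ^ (2 * (i : ℕ) + 1) := by
    intro v hv
    rcases Finset.mem_symmDiff.mp hv with ⟨h, _⟩ | ⟨h, _⟩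
    exacts [hS v h, hT v h]
  have hUcard : U.card ≤ 2 * d := by
    have h1 : U ⊆ S ∪ T := by
      intro a ha
      rcases Finset.mem_symmDiff.mp ha with ⟨h, _⟩ | ⟨h, _⟩ <;> simp [h]
    calc U.card ≤ (S ∪ T).card := Finset.card_le_card h1
      _ ≤ S.card + T.card := Finset.card_union_le _ _
      _ ≤ 2 * d := by omega
  set π : (Fin d → F) → F := fun v => v ⟨0, hd⟩ with hπ
  have hπψ : ∀ x : F, π (fun i => x ^ (2 * (i : ℕ) + 1)) = x := by
    intro x; simp [hπ]
  have hinj : ∀ v ∈ U, ∀ w ∈ U, π v = π w → v = w := by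
    intro v hv w hw hvw
    obtain ⟨x, hx0, hxv⟩ := hUM v hv
    obtain ⟨y, hy0, hyw⟩ := hUM w hw
    rw [hxv, hyw] at hvw ⊢
    rw [hπψ, hπψ] at hvw
    rw [hvw]
  set X := U.image π with hX
  have hXcard : X.card = U.card := Finset.card_image_of_injOn hinj
  have hXne : ∀ x ∈ X, x ≠ 0 := by
    intro x hx
    obtain ⟨v, hv, rfl⟩ := Finset.mem_image.mp hx
    obtain ⟨y, hy0, rfl⟩ := hUM v hv
    rw [hπψ]; exact hy0
  have hmom : ∀ i : Fin d, ∑ x ∈ X, x ^ (2 * (i : ℕ) + 1) = 0 := by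
    intro i
    rw [hX, Finset.sum_image hinj]
    have hc : ∀ v ∈ U, (π v) ^ (2 * (i : ℕ) + 1) = v i := by
      intro v hv
      obtain ⟨x, hx0, rfl⟩ := hUM v hv
      rw [hπψ]
    rw [Finset.sum_congr rfl hc]
    calc ∑ v ∈ U, v i = (∑ v ∈ U, v) i := by rw [Finset.sum_apply]
      _ = 0 := by rw [hU0]; rfl
  have hpow : ∀ k, 0 < k → k ≤ 2 * d → ∑ x ∈ X, x ^ k = 0 := by
    intro k
    induction k using Nat.strong_induction_on with
    | _ k ih =>
      intro hk1 hk2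
      rcases Nat.even_or_odd k with ⟨j, hj⟩ | ⟨j, hj⟩
      · have hk : k = j * 2 := by omega
        subst hk
        have hjj := ih j (by omega) (by omega) (by omega)
        have heq : ∑ x ∈ X, x ^ (j * 2) = (∑ x ∈ X, x ^ j) ^ 2 := by
          rw [sum_pow_char]
          exact Finset.sum_congr rfl fun x _ => by rw [← pow_mul]
        rw [heq, hjj, zero_pow two_ne_zero]
      · have hjd : j < d := by omega
        have hm2 : ∑ x ∈ X, x ^ (2 * j + 1) = 0 := by simpa using hmom ⟨j, hjd⟩
        rw [hj]; exact hm2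
  have hXpos : 0 < X.card := Finset.card_pos.mpr (hUne.image π)
  set n := X.card with hn
  have hcard : Fintype.card ↥X = n := Fintype.card_coe X
  let e : Fin n ≃ ↥X := ((Fintype.equivFin ↥X).trans (finCongr hcard)).symm
  let x : Fin n → F := fun j => ((e j : ↥X) : F)
  have hxinj : Function.Injective x := fun a b hab => e.injective (Subtype.ext hab)
  have hsum' : ∀ k : ℕ, ∑ j : Fin n, (x j) ^ k = ∑ a ∈ X, a ^ k := by
    intro k
    rw [← Finset.sum_coe_sort X (fun a => a ^ k)]
    exact Equiv.sum_comp e (fun a : ↥X => (a : F) ^ k)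
  let A : Matrix (Fin n) (Fin n) F := Matrix.of fun i j => x j ^ ((i : ℕ) + 1)
  have hA : A = (Matrix.vandermonde x).transpose * Matrix.diagonal x := by
    ext i j
    rw [Matrix.mul_diagonal]
    simp [A, Matrix.vandermonde, pow_succ]
  have hdet : A.det ≠ 0 := by
    rw [hA, Matrix.det_mul, Matrix.det_transpose, Matrix.det_diagonal,
      Matrix.det_vandermonde]
    apply mul_ne_zero
    · apply Finset.prod_ne_zero_iff.mpr
      intro i _
      apply Finset.prod_ne_zero_iff.mpr
      intro j hj
      exact sub_ne_zero.mpr fun h => absurd (hxinj h) (Finset.mem_Ioi.mp hj).ne'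
    · exact Finset.prod_ne_zero_iff.mpr fun j _ => hXne _ (e j).2
  have hmul : A.mulVec (fun _ => 1) = 0 := by
    funext i
    have : A.mulVec (fun _ => 1) i = ∑ j : Fin n, x j ^ ((i : ℕ) + 1) := by
      simp [Matrix.mulVec, dotProduct, A]
    rw [this, hsum']
    have hle : (i : ℕ) + 1 ≤ 2 * d := by
      have := i.isLt
      omega
    exact (hpow _ (Nat.succ_pos _) hle).trans rfl
  have h10 := congrFun (Matrix.eq_zero_of_mulVec_eq_zero hdet hmul) ⟨0, hXpos⟩
  exact one_ne_zero h10

theorem exists_spanning_sidon_type_set (d m : ℕ) (hd : 0 < d) (hm : 0 < m) :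
    ∃ B : Finset (Fin (d * m) → ZMod 2),
      2 ^ m - 1 ≤ B.card ∧
      Submodule.span (ZMod 2) (B : Set (Fin (d * m) → ZMod 2)) = ⊤ ∧
      ∀ S T : Finset (Fin (d * m) → ZMod 2), S ⊆ B → T ⊆ B →
        S.card ≤ d → T.card ≤ d → (∑ v ∈ S, v) = ∑ v ∈ T, v → S = T := by
  classical
  set V := Fin (d * m) → ZMod 2 with hV
  set F := GaloisField 2 m with hF
  letI : Fintype F := Fintype.ofFinite F
  have hm' : m ≠ 0 := hm.ne'
  have hcardF : Fintype.card F = 2 ^ m := by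
    rw [← Nat.card_eq_fintype_card]
    exact GaloisField.card 2 m hm'
  have hfrF : Module.finrank (ZMod 2) F = m := GaloisField.finrank 2 hm'
  have h1 : Module.finrank (ZMod 2) (Fin d → F) = d * m := by
    rw [Module.finrank_pi_fintype (ZMod 2)]
    simp [hfrF, Finset.sum_const]
  have h2 : Module.finrank (ZMod 2) V = d * m := by
    show Module.finrank (ZMod 2) (Fin (d * m) → ZMod 2) = d * m
    simp
  let φ : (Fin d → F) ≃ₗ[ZMod 2] V := LinearEquiv.ofFinrankEq _ _ (h1.trans h2.symm)
  set ψ : F → (Fin d → F) := fun x i => x ^ (2 * (i : ℕ) + 1) with hψ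
  have hψinj : Function.Injective ψ := by
    intro a b h
    have := congrFun h ⟨0, hd⟩
    simpa [hψ] using this
  set M₀ : Finset (Fin d → F) := (Finset.univ.erase (0 : F)).image ψ with hM₀
  set B₀ : Finset V := M₀.image φ with hB₀
  have hcardB₀ : B₀.card = 2 ^ m - 1 := by
    rw [hB₀, Finset.card_image_of_injective _ φ.injective, hM₀,
      Finset.card_image_of_injective _ hψinj,
      Finset.card_erase_of_mem (Finset.mem_univ _), Finset.card_univ, hcardF]
  -- uniqueness of short sums within B₀
  have hB₀uniq : ∀ S T : Finset V, S ⊆ B₀ → T ⊆ B₀ → S.card ≤ d → T.card ≤ d →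
      (∑ v ∈ S, v) = ∑ v ∈ T, v → S = T := by
    intro S T hSB hTB hScard hTcard hsum
    obtain ⟨S', hS'M, hS'⟩ := Finset.subset_image_iff.mp (hB₀ ▸ hSB)
    obtain ⟨T', hT'M, hT'⟩ := Finset.subset_image_iff.mp (hB₀ ▸ hTB)
    have hsumS : ∑ v ∈ S, v = φ (∑ u ∈ S', u) := by
      rw [← hS', Finset.sum_image fun a _ b _ h => φ.injective h, map_sum]
    have hsumT : ∑ v ∈ T, v = φ (∑ u ∈ T', u) := by
      rw [← hT', Finset.sum_image fun a _ b _ h => φ.injective h, map_sum]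
    have hsums : ∑ u ∈ S', u = ∑ u ∈ T', u := by
      apply φ.injective
      rw [← hsumS, ← hsumT, hsum]
    have hmemS : ∀ v ∈ S', ∃ x : F, x ≠ 0 ∧ v = fun i : Fin d => x ^ (2 * (i : ℕ) + 1) := by
      intro v hv
      obtain ⟨x, hx, rfl⟩ := Finset.mem_image.mp (hS'M hv)
      exact ⟨x, (Finset.mem_erase.mp hx).1, rfl⟩
    have hmemT : ∀ v ∈ T', ∃ x : F, x ≠ 0 ∧ v = fun i : Fin d => x ^ (2 * (i : ℕ) + 1) := by
      intro v hv
      obtain ⟨x, hx, rfl⟩ := Finset.mem_image.mp (hT'M hv)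
      exact ⟨x, (Finset.mem_erase.mp hx).1, rfl⟩
    have hcS : S'.card ≤ d := by
      rw [← Finset.card_image_of_injective S' φ.injective, hS']; exact hScard
    have hcT : T'.card ≤ d := by
      rw [← Finset.card_image_of_injective T' φ.injective, hT']; exact hTcard
    have := moment_sum_unique hd S' T' hmemS hmemT hcS hcT hsums
    rw [← hS', ← hT', this]
  -- complement of the span of B₀
  set W := Submodule.span (ZMod 2) (B₀ : Set V) with hW
  obtain ⟨W', hc⟩ := Submodule.exists_isCompl W
  let bW := Module.finBasis (ZMod 2) ↥W'
  let fC : Fin (Module.finrank (ZMod 2) ↥W') → V := fun i => (bW i : V)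
  have hfCli : LinearIndependent (ZMod 2) fC :=
    bW.linearIndependent.map' W'.subtype (Submodule.ker_subtype W')
  have hfCinj : Function.Injective fC := hfCli.injective
  set C : Finset V := Finset.image fC Finset.univ with hC
  have hCW' : ∀ v ∈ C, v ∈ W' := by
    intro v hv
    obtain ⟨i, _, rfl⟩ := Finset.mem_image.mp hv
    exact (bW i).2
  set B : Finset V := B₀ ∪ C with hB
  have h2V : ∀ v : V, v + v = 0 := fun v => by
    funext i; exact CharTwo.add_self_eq_zero _
  refine ⟨B, ?_, ?_, ?_⟩
  · rw [← hcardB₀]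
    exact Finset.card_le_card Finset.subset_union_left
  · have hspanC : Submodule.span (ZMod 2) (C : Set V) = W' := by
      have hrange : (C : Set V) = W'.subtype '' Set.range bW := by
        rw [hC, Finset.coe_image, Finset.coe_univ, Set.image_univ]
        rw [← Set.range_comp]
        rfl
      rw [hrange, Submodule.span_image, bW.span_eq, Submodule.map_top,
        Submodule.range_subtype]
    rw [hB, Finset.coe_union, Submodule.span_union, hspanC, ← hW]
    exact hc.sup_eq_top
  · intro S T hSB hTB hScard hTcard hsum
    have hdecomp : ∀ S : Finset V, ∑ v ∈ S, v = ∑ v ∈ S ∩ B₀, v + ∑ v ∈ S \ B₀, v := by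
      intro S
      have hsub : S ∩ B₀ ⊆ S := Finset.inter_subset_left
      have h3 := Finset.sum_sdiff (f := fun v : V => v) hsub
      rw [Finset.sdiff_inter_self_left] at h3
      rw [← h3, add_comm]
    have hWmem : ∀ S : Finset V, ∑ v ∈ S ∩ B₀, v ∈ W := by
      intro S
      apply Submodule.sum_mem
      intro v hv
      exact Submodule.subset_span (Finset.mem_coe.mpr (Finset.mem_inter.mp hv).2)
    have hsubC : ∀ S : Finset V, S ⊆ B → S \ B₀ ⊆ C := by
      intro S hS v hv
      rcases Finset.mem_union.mp (hS (Finset.mem_sdiff.mp hv).1) with h | h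
      · exact absurd h (Finset.mem_sdiff.mp hv).2
      · exact h
    have hW'mem : ∀ S : Finset V, S ⊆ B → ∑ v ∈ S \ B₀, v ∈ W' := by
      intro S hS
      apply Submodule.sum_mem
      intro v hv
      exact hCW' v (hsubC S hS hv)
    have hrearr : (∑ v ∈ S ∩ B₀, v) - ∑ v ∈ T ∩ B₀, v
        = (∑ v ∈ T \ B₀, v) - ∑ v ∈ S \ B₀, v := by
      rw [sub_eq_sub_iff_add_eq_add]
      have hs := hsum
      rw [hdecomp S, hdecomp T] at hs
      rw [hs]; exact add_comm _ _
    have hmem1 : (∑ v ∈ S ∩ B₀, v) - ∑ v ∈ T ∩ B₀, v ∈ W :=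
      sub_mem (hWmem S) (hWmem T)
    have hmem2 : (∑ v ∈ S ∩ B₀, v) - ∑ v ∈ T ∩ B₀, v ∈ W' := by
      rw [hrearr]; exact sub_mem (hW'mem T hTB) (hW'mem S hSB)
    have h0 : (∑ v ∈ S ∩ B₀, v) - ∑ v ∈ T ∩ B₀, v = 0 :=
      Submodule.disjoint_def.mp hc.disjoint _ hmem1 hmem2
    have heq1 : ∑ v ∈ S ∩ B₀, v = ∑ v ∈ T ∩ B₀, v := sub_eq_zero.mp h0
    have heq2 : ∑ v ∈ S \ B₀, v = ∑ v ∈ T \ B₀, v :=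
      (sub_eq_zero.mp (hrearr ▸ h0)).symm
    have hP1 : S ∩ B₀ = T ∩ B₀ := by
      apply hB₀uniq _ _ Finset.inter_subset_right Finset.inter_subset_right
      · exact le_trans (Finset.card_le_card Finset.inter_subset_left) hScard
      · exact le_trans (Finset.card_le_card Finset.inter_subset_left) hTcard
      · exact heq1
    have hP2 : S \ B₀ = T \ B₀ := by
      obtain ⟨I, _, hI⟩ := Finset.subset_image_iff.mp (hC ▸ hsubC S hSB)
      obtain ⟨J, _, hJ⟩ := Finset.subset_image_iff.mp (hC ▸ hsubC T hTB)
      have hsumI : ∑ v ∈ S \ B₀, v = ∑ i ∈ I, fC i := by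
        rw [← hI, Finset.sum_image fun a _ b _ h => hfCinj h]
      have hsumJ : ∑ v ∈ T \ B₀, v = ∑ i ∈ J, fC i := by
        rw [← hJ, Finset.sum_image fun a _ b _ h => hfCinj h]
      have hs : ∑ i ∈ I, fC i = ∑ i ∈ J, fC i := by
        rw [← hsumI, ← hsumJ, heq2]
      have h0' : ∑ i ∈ I ∆ J, fC i = 0 := (char2_sum_eq_iff h2V I J fC).mp hs
      have hIJ : I = J := by
        have := li_sum_eq_empty hfCli h0'
        have hb : I ∆ J = ⊥ := by rw [Finset.bot_eq_empty]; exact this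
        exact symmDiff_eq_bot.mp hb
      rw [← hI, ← hJ, hIJ]
    ext a
    constructor
    · intro ha
      by_cases hab : a ∈ B₀
      · exact (Finset.mem_inter.mp (hP1 ▸ Finset.mem_inter.mpr ⟨ha, hab⟩)).1
      · exact (Finset.mem_sdiff.mp (hP2 ▸ Finset.mem_sdiff.mpr ⟨ha, hab⟩)).1
    · intro ha
      by_cases hab : a ∈ B₀
      · exact (Finset.mem_inter.mp (hP1 ▸ Finset.mem_inter.mpr ⟨ha, hab⟩)).1
      · exact (Finset.mem_sdiff.mp (hP2 ▸ Finset.mem_sdiff.mpr ⟨ha, hab⟩)).1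
end

section
/- For any positive integers d and m, the F₂-vector space F₂^{dm} contains a subset B₀ of size 2^m − 1 such that any two distinct subsets of B₀ of size at most d have distinct sums. -/
/-!
Take `K = 𝔽_{2^m}` and send each nonzero `x ∈ K` to the column `(x, x³, …, x^{2d-1})` of the
parity-check matrix of a binary BCH code, in `K^d ≅ 𝔽₂^{dm}`. If two distinct subsets `S, T` of
`Kˣ` of size at most `d` had equal column sums, their symmetric difference `U` would have vanishing
odd power sums `p₁, p₃, …, p_{2d-1}`. In characteristic 2, `p_{2k} = p_k²`, so all of
`p₁, …, p_{2d}` vanish, and since `|U| ≤ 2d` and `0 ∉ U` the Vandermonde determinant forces `U = ∅`.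
-/

open Finset
open scoped symmDiff

/-- `AddDissociated`, restricted to subsets of size at most `d`. -/
def DissociatedUpTo {V : Type*} [AddCommMonoid V] (d : ℕ) (B : Finset V) : Prop :=
  ∀ S T, S ⊆ B → T ⊆ B → #S ≤ d → #T ≤ d → ∑ v ∈ S, v = ∑ v ∈ T, v → S = T

theorem dissociatedUpTo_image {α V : Type*} [DecidableEq V] [AddCommMonoid V] {d : ℕ}
    {A : Finset α} {f : α → V} (hf : Set.InjOn f A)
    (h : ∀ S T, S ⊆ A → T ⊆ A → #S ≤ d → #T ≤ d → ∑ x ∈ S, f x = ∑ x ∈ T, f x → S = T) :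
    DissociatedUpTo d (A.image f) := by
  intro S T hS hT hSd hTd hsum
  obtain ⟨S', hS'A, rfl⟩ := subset_image_iff.mp hS
  obtain ⟨T', hT'A, rfl⟩ := subset_image_iff.mp hT
  have hS'inj : Set.InjOn f S' := hf.mono hS'A
  have hT'inj : Set.InjOn f T' := hf.mono hT'A
  rw [card_image_of_injOn hS'inj] at hSd
  rw [card_image_of_injOn hT'inj] at hTd
  rw [sum_image hS'inj, sum_image hT'inj] at hsum
  rw [h S' T' hS'A hT'A hSd hTd hsum]

theorem Finset.eq_empty_of_sum_pow_eq_zero {R : Type*} [CommRing R] [IsDomain R] {U : Finset R}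
    (h0 : (0 : R) ∉ U) (h : ∀ j ∈ Icc 1 #U, ∑ x ∈ U, x ^ j = 0) : U = ∅ := by
  let v : Fin #U → R := fun i ↦ U.equivFin.symm i
  have hv : Function.Injective v := Subtype.val_injective.comp U.equivFin.symm.injective
  have hsum (g : R → R) : ∑ i, g (v i) = ∑ x ∈ U, g x :=
    (U.equivFin.symm.sum_comp (fun x ↦ g x)).trans (sum_coe_sort U g)
  -- `∑ᵢ vᵢ · vᵢ^j = p_{j+1}`, so `v` lies in the kernel of the (transposed) Vandermonde matrix
  have hv0 : v = 0 := Matrix.eq_zero_of_forall_pow_sum_mul_pow_eq_zero hv fun j ↦ by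
    simp_rw [← pow_succ']
    exact (hsum (· ^ (j.val + 1))).trans (h _ (mem_Icc.mpr ⟨Nat.le_add_left 1 j, j.isLt⟩))
  rw [← not_nonempty_iff_eq_empty]
  rintro ⟨x, hx⟩
  have hx0 : x = 0 := by simpa [v] using congr_fun hv0 (U.equivFin ⟨x, hx⟩)
  exact h0 (hx0 ▸ hx)

theorem Finset.sum_pow_eq_zero_of_sum_odd_pow_eq_zero {R : Type*} [CommSemiring R] [CharP R 2]
    {d : ℕ} {U : Finset R} (h : ∀ i < d, ∑ x ∈ U, x ^ (2 * i + 1) = 0) :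
    ∀ j ∈ Icc 1 (2 * d), ∑ x ∈ U, x ^ j = 0 := by
  intro j hj
  induction j using Nat.strong_induction_on with
  | _ j ih =>
    obtain ⟨hj1, hjd⟩ := mem_Icc.mp hj
    obtain ⟨k, rfl | rfl⟩ := Nat.even_or_odd' j
    · have hk := ih k (by omega) (mem_Icc.mpr ⟨by omega, by omega⟩)
      calc ∑ x ∈ U, x ^ (2 * k) = (∑ x ∈ U, x ^ k) ^ 2 := by
            simp_rw [sum_pow_char, ← pow_mul, mul_comm k]
        _ = 0 := by rw [hk, zero_pow two_ne_zero]
    · exact h k (by omega)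

theorem Finset.sum_symmDiff_eq_zero_of_sum_eq {ι R : Type*} [DecidableEq ι] [Ring R] [CharP R 2]
    {s t : Finset ι} {f : ι → R} (h : ∑ i ∈ s, f i = ∑ i ∈ t, f i) :
    ∑ i ∈ s ∆ t, f i = 0 := by
  rw [symmDiff_def, sup_eq_union, sum_union disjoint_sdiff_sdiff,
    sum_sdiff_eq_sum_sdiff_iff.mpr h, CharTwo.add_self_eq_zero]

theorem Finset.eq_of_sum_odd_pow_eq {R : Type*} [CommRing R] [IsDomain R] [CharP R 2]
    {d : ℕ} {S T : Finset R} (hS0 : (0 : R) ∉ S) (hT0 : (0 : R) ∉ T) (hS : #S ≤ d) (hT : #T ≤ d)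
    (h : ∀ i < d, ∑ x ∈ S, x ^ (2 * i + 1) = ∑ x ∈ T, x ^ (2 * i + 1)) : S = T := by
  classical
  have hU : S ∆ T ⊆ S ∪ T := symmDiff_le_sup
  have hU0 : (0 : R) ∉ S ∆ T := fun h0 ↦ (mem_union.mp (hU h0)).elim hS0 hT0
  have hUcard : #(S ∆ T) ≤ 2 * d := by grind [card_le_card hU, card_union_le S T]
  have hodd : ∀ i < d, ∑ x ∈ S ∆ T, x ^ (2 * i + 1) = 0 := fun i hi ↦
    sum_symmDiff_eq_zero_of_sum_eq (h i hi)
  have hempty : S ∆ T = ∅ := eq_empty_of_sum_pow_eq_zero hU0 fun j hj ↦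
    sum_pow_eq_zero_of_sum_odd_pow_eq_zero hodd j (Icc_subset_Icc_right hUcard hj)
  exact symmDiff_eq_bot.mp hempty

def oddPowerVector {R : Type*} [Monoid R] (d : ℕ) (x : R) : Fin d → R :=
  fun i ↦ x ^ (2 * i.val + 1)

theorem oddPowerVector_injective {R : Type*} [Monoid R] {d : ℕ} (hd : 0 < d) :
    Function.Injective (oddPowerVector (R := R) d) := fun x y hxy ↦ by
  simpa [oddPowerVector] using congr_fun hxy ⟨0, hd⟩

theorem sum_oddPowerVector_apply {R : Type*} [Semiring R] {d : ℕ} (S : Finset R) (i : Fin d) :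
    (∑ x ∈ S, oddPowerVector d x) i = ∑ x ∈ S, x ^ (2 * i.val + 1) :=
  sum_apply i S _

theorem exists_sidon_type_set (d m : ℕ) (hd : 0 < d) (hm : 0 < m) :
    ∃ B₀ : Finset (Fin (d * m) → ZMod 2),
      B₀.card = 2 ^ m - 1 ∧
      ∀ S T : Finset (Fin (d * m) → ZMod 2), S ⊆ B₀ → T ⊆ B₀ →
        S.card ≤ d → T.card ≤ d → (∑ v ∈ S, v) = ∑ v ∈ T, v → S = T := by
  classical
  let K := GaloisField 2 m
  let : Fintype K := Fintype.ofFinite K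
  have hfinrank : Module.finrank (ZMod 2) (Fin d → K) =
      Module.finrank (ZMod 2) (Fin (d * m) → ZMod 2) := by
    rw [Module.finrank_pi_fintype]
    simp [K, GaloisField.finrank 2 hm.ne']
  let e := LinearEquiv.ofFinrankEq _ _ hfinrank
  let f : K → Fin (d * m) → ZMod 2 := e ∘ oddPowerVector d
  have hf : Function.Injective f := e.injective.comp (oddPowerVector_injective hd)
  refine ⟨(univ.erase 0).image f, ?_, dissociatedUpTo_image hf.injOn ?_⟩
  · rw [card_image_of_injective _ hf, card_erase_of_mem (mem_univ 0), card_univ,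
      ← Nat.card_eq_fintype_card, GaloisField.card 2 m hm.ne']
  · intro S T hS hT hSd hTd hsum
    have hvec : ∑ x ∈ S, oddPowerVector d x = ∑ x ∈ T, oddPowerVector d x := by
      simpa [f, ← map_sum] using hsum
    refine eq_of_sum_odd_pow_eq (fun h0 ↦ by simpa using hS h0) (fun h0 ↦ by simpa using hT h0)
      hSd hTd fun i hi ↦ ?_
    simpa only [sum_oddPowerVector_apply] using congr_fun hvec ⟨i, hi⟩
end

section
/- Let d, m, n be positive integers with dm ≤ n < 2^m. Then there exists a vector subspace W of F₂^n of codimension dm containing no nonzero vector of Hamming weight at most 2d. -/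
open Finset Module

-- aux: a subspace of any given finrank ≤ dim exists
lemma exists_finrank_eq_aux (K V : Type*) [Field K] [AddCommGroup V] [Module K V]
    [FiniteDimensional K V] (k : ℕ) (h : k ≤ finrank K V) :
    ∃ W : Submodule K V, finrank K W = k := by
  classical
  let b := finBasis K V
  let v : Fin k → V := fun j => b (Fin.castLE h j)
  have hli : LinearIndependent K v :=
    b.linearIndependent.comp _ (Fin.castLE_injective h)
  exact ⟨Submodule.span K (Set.range v), by
    rw [finrank_span_eq_card hli, Fintype.card_fin]⟩

theorem exists_subspace_large_min_weight (d m n : ℕ) (hd : 0 < d) (hm : 0 < m)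
    (h1 : d * m ≤ n) (h2 : n < 2 ^ m) :
    ∃ W : Submodule (ZMod 2) (Fin n → ZMod 2),
      Module.finrank (ZMod 2) W = n - d * m ∧
      ∀ x ∈ W, x ≠ 0 →
        2 * d < (Finset.univ.filter fun i => x i ≠ 0).card := by
  classical
  set F := GaloisField 2 m with hF
  haveI : Fintype F := Fintype.ofFinite F
  have hcard : Fintype.card F = 2 ^ m := by
    rw [← Nat.card_eq_fintype_card]; exact GaloisField.card 2 m hm.ne'
  -- choose n distinct nonzero elements
  have hemb : Nonempty (Fin n ↪ Fˣ) := by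
    rw [Function.Embedding.nonempty_iff_card_le, Fintype.card_fin, Fintype.card_units, hcard]
    omega
  obtain ⟨e⟩ := hemb
  set α : Fin n → F := fun i => ((e i : Fˣ) : F) with hα
  have hαinj : Function.Injective α := fun i j hij => e.injective (Units.ext hij)
  have hαne : ∀ i, α i ≠ 0 := fun i => Units.ne_zero _
  -- the parity-check map
  set φ : (Fin n → ZMod 2) →ₗ[ZMod 2] (Fin d → F) :=
    LinearMap.pi fun k : Fin d =>
      ∑ i : Fin n, (LinearMap.proj i).smulRight (α i ^ (2 * (k : ℕ) + 1)) with hφ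
  have hφapp : ∀ (x : Fin n → ZMod 2) (k : Fin d),
      φ x k = ∑ i : Fin n, x i • α i ^ (2 * (k : ℕ) + 1) := by
    intro x k
    simp [hφ, LinearMap.pi_apply, LinearMap.sum_apply, LinearMap.smulRight_apply]
  -- the kernel has finrank ≥ n - d*m
  have hrange : finrank (ZMod 2) (LinearMap.range φ) ≤ d * m := by
    calc finrank (ZMod 2) (LinearMap.range φ) ≤ finrank (ZMod 2) (Fin d → F) :=
          (LinearMap.range φ).finrank_le
      _ = d * m := by
          rw [Module.finrank_pi_fintype, GaloisField.finrank 2 hm.ne', Finset.sum_const,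
            Finset.card_univ, Fintype.card_fin, smul_eq_mul]
  have hker : n - d * m ≤ finrank (ZMod 2) (LinearMap.ker φ) := by
    have := LinearMap.finrank_range_add_finrank_ker φ
    rw [Module.finrank_fintype_fun_eq_card, Fintype.card_fin] at this
    omega
  obtain ⟨W₀, hW₀⟩ := exists_finrank_eq_aux (ZMod 2) (LinearMap.ker φ) (n - d * m) hker
  refine ⟨W₀.map (LinearMap.ker φ).subtype, ?_, ?_⟩
  · rw [Submodule.finrank_map_subtype_eq]; exact hW₀
  intro x hx hx0
  -- x is in the kernel
  have hxk : φ x = 0 := by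
    have : x ∈ LinearMap.ker φ := by
      obtain ⟨y, _, rfl⟩ := hx; exact y.2
    exact this
  by_contra hcon
  push_neg at hcon
  set S : Finset (Fin n) := Finset.univ.filter fun i => x i ≠ 0 with hS
  have hone : ∀ a : ZMod 2, a ≠ 0 → a = 1 := by decide
  -- odd power sums vanish
  have hodd : ∀ k : Fin d, ∑ i ∈ S, α i ^ (2 * (k : ℕ) + 1) = 0 := by
    intro k
    have h0 : φ x k = 0 := by rw [hxk]; rfl
    rw [hφapp] at h0
    rw [← h0]
    rw [← Finset.sum_subset (Finset.subset_univ S) (fun i _ hiS => by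
      have : x i = 0 := by
        by_contra h; exact hiS (Finset.mem_filter.2 ⟨Finset.mem_univ i, h⟩)
      rw [this, zero_smul])]
    refine Finset.sum_congr rfl fun i hi => ?_
    have : x i = 1 := hone _ (Finset.mem_filter.1 hi).2
    rw [this, one_smul]
  -- all power sums 1..2d vanish
  have hall : ∀ j, 1 ≤ j → j ≤ 2 * d → ∑ i ∈ S, α i ^ j = 0 := by
    intro j
    induction j using Nat.strong_induction_on with
    | _ j ih =>
      intro hj1 hj2
      rcases Nat.even_or_odd j with ⟨j', hj'⟩ | ⟨k, hk⟩
      · have hj'1 : 1 ≤ j' := by omega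
        have hj'2 : j' ≤ 2 * d := by omega
        have := ih j' (by omega) hj'1 hj'2
        have hchar : (∑ i ∈ S, α i ^ j') ^ 2 = ∑ i ∈ S, (α i ^ j') ^ 2 :=
          sum_pow_char 2 S _
        rw [this, zero_pow (by norm_num)] at hchar
        calc ∑ i ∈ S, α i ^ j = ∑ i ∈ S, (α i ^ j') ^ 2 := by
              refine Finset.sum_congr rfl fun i _ => ?_
              rw [← pow_mul]; congr 1; omega
          _ = 0 := hchar.symm
      · have hkd : k < d := by omega
        have := hodd ⟨k, hkd⟩
        simpa [hk, Nat.add_comm] using this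
  -- Vandermonde contradiction
  have hSne : S.Nonempty := by
    obtain ⟨i, hi⟩ : ∃ i, x i ≠ 0 := by
      by_contra h; push_neg at h; exact hx0 (funext h)
    exact ⟨i, Finset.mem_filter.2 ⟨Finset.mem_univ i, hi⟩⟩
  set w := S.card with hw
  have hw1 : 1 ≤ w := Finset.card_pos.2 hSne
  have hw2 : w ≤ 2 * d := hcon
  set eqv := S.equivFin with heqv
  set β : Fin w → F := fun j => α (eqv.symm j : ↥S) with hβ
  have hβinj : Function.Injective β := by
    intro i j hij
    exact eqv.symm.injective (Subtype.ext (hαinj hij))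
  have hβne : ∀ j, β j ≠ 0 := fun j => hαne _
  set M : Matrix (Fin w) (Fin w) F := Matrix.of fun j i => β i ^ ((j : ℕ) + 1) with hM
  have hMv : M.mulVec (fun _ => (1 : F)) = 0 := by
    funext j
    show ∑ i, M j i * 1 = 0
    have : ∑ i : Fin w, β i ^ ((j : ℕ) + 1) = ∑ i ∈ S, α i ^ ((j : ℕ) + 1) := by
      rw [← Finset.sum_coe_sort S (fun i => α i ^ ((j : ℕ) + 1))]
      exact Fintype.sum_equiv eqv.symm _ _ (fun _ => rfl)
    simp only [hM, Matrix.of_apply, mul_one]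
    rw [this]
    exact hall _ (by omega) (by omega)
  have hMdet : M.det ≠ 0 := by
    have hMT : M.transpose = Matrix.diagonal β * Matrix.vandermonde β := by
      ext i j
      simp [hM, Matrix.mul_apply, Matrix.diagonal, Matrix.vandermonde,
        Finset.sum_ite_eq, pow_succ']
    have : M.det = (∏ i, β i) * (Matrix.vandermonde β).det := by
      rw [← Matrix.det_transpose, hMT, Matrix.det_mul, Matrix.det_diagonal]
    rw [this]
    exact mul_ne_zero (Finset.prod_ne_zero_iff.2 fun i _ => hβne i)
      (Matrix.det_vandermonde_ne_zero_iff.2 hβinj)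
  have := Matrix.eq_zero_of_mulVec_eq_zero hMdet hMv
  have h1 : (1 : F) = 0 := by
    have := congrFun this ⟨0, by omega⟩
    simpa using this
  exact one_ne_zero h1
end

section
/- Let d, m, n be positive integers with dm ≤ n < 2^m. Then there exist dm subsets A₁, …, A_{dm} of {1,…,n} such that for any two distinct subsets X, Y ⊆ {1,…,n} with |X| ≤ d and |Y| ≤ d, there is an index i for which |A_i ∩ X| and |A_i ∩ Y| have different parity. -/
open Finset Module Matrix

private lemma zmod2_cases' : ∀ c : ZMod 2, c = 0 ∨ c = 1 := by decide

private lemma zmod2_cases (c : ZMod 2) : c = 0 ∨ c = 1 := zmod2_cases' c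

theorem parity_search_upper_bound (d m n : ℕ) (hd : 0 < d) (hm : 0 < m)
    (h1 : d * m ≤ n) (h2 : n < 2 ^ m) :
    ∃ A : Fin (d * m) → Finset (Fin n),
      ∀ X Y : Finset (Fin n), X ≠ Y → X.card ≤ d → Y.card ≤ d →
        ∃ i : Fin (d * m), (A i ∩ X).card % 2 ≠ (A i ∩ Y).card % 2 := by
  classical
  haveI fact2 : Fact (Nat.Prime 2) := ⟨Nat.prime_two⟩
  set F := GaloisField 2 m with hF
  haveI : Fintype F := Fintype.ofFinite F
  have hcard : Fintype.card F = 2 ^ m := by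
    rw [← Nat.card_eq_fintype_card]
    exact GaloisField.card 2 m hm.ne'
  -- finrank of F over ZMod 2 is m
  have hfr : Module.finrank (ZMod 2) F = m := by
    have h := card_eq_pow_finrank (K := ZMod 2) (V := F)
    rw [ZMod.card, hcard] at h
    exact (Nat.pow_right_injective le_rfl h.symm)
  have B : Basis (Fin m) (ZMod 2) F := Module.finBasisOfFinrankEq _ _ hfr
  -- an injection from Fin n into nonzero elements of F
  have hcardu : n ≤ Fintype.card Fˣ := by
    rw [Fintype.card_units, hcard]; omega
  obtain ⟨e⟩ : Nonempty (Fin n ↪ Fˣ) := Function.Embedding.nonempty_of_card_le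
    (by simpa using hcardu)
  set v : Fin n → F := fun x => (e x : F) with hv
  have hvinj : Function.Injective v := fun a b hab => e.injective (Units.ext hab)
  have hv0 : ∀ x, v x ≠ 0 := fun x => (e x).ne_zero
  set w : Fin d → Fin n → F := fun k x => v x ^ (2 * (k : ℕ) + 1) with hw
  set A : Fin (d * m) → Finset (Fin n) := fun i =>
    Finset.univ.filter (fun x =>
      B.repr (w (finProdFinEquiv.symm i).1 x) (finProdFinEquiv.symm i).2 = 1) with hA
  refine ⟨A, ?_⟩
  intro X Y hne hX hY
  by_contra hcon
  push_neg at hcon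
  -- parity of intersection as repr of a sum
  have key : ∀ (k : Fin d) (b : Fin m) (S : Finset (Fin n)),
      (((A (finProdFinEquiv (k, b)) ∩ S).card : ZMod 2)) =
        B.repr (∑ x ∈ S, w k x) b := by
    intro k b S
    have hAS : A (finProdFinEquiv (k, b)) ∩ S =
        S.filter (fun x => B.repr (w k x) b = 1) := by
      ext x
      simp only [hA, Equiv.symm_apply_apply]
      simp [Finset.mem_filter, Finset.mem_inter, and_comm]
    rw [hAS, Finset.card_filter, map_sum, Finset.sum_apply']
    push_cast
    refine Finset.sum_congr rfl fun x _ => ?_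
    have hc : (B.repr (w k x) b = 0) ∨ (B.repr (w k x) b = 1) :=
      zmod2_cases _
    rcases hc with hcc | hcc <;> simp [hcc]
  -- equal power sums over X and Y
  have hkeq : ∀ k : Fin d, (∑ x ∈ X, w k x) = ∑ y ∈ Y, w k y := by
    intro k
    apply B.repr.injective
    ext b
    have h := hcon (finProdFinEquiv (k, b))
    have h' : (((A (finProdFinEquiv (k, b)) ∩ X).card : ZMod 2)) =
        ((A (finProdFinEquiv (k, b)) ∩ Y).card : ZMod 2) :=
      (ZMod.natCast_eq_natCast_iff' _ _ 2).mpr h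
    rw [key, key] at h'
    exact h'
  -- symmetric difference
  set Z : Finset (Fin n) := (X \ Y) ∪ (Y \ X) with hZ
  have hZne : Z.Nonempty := by
    rw [Finset.nonempty_iff_ne_empty]
    intro h0
    rw [hZ] at h0
    have h0' := Finset.union_eq_empty.mp h0
    exact hne (Finset.Subset.antisymm
      (Finset.sdiff_eq_empty_iff_subset.mp h0'.1)
      (Finset.sdiff_eq_empty_iff_subset.mp h0'.2))
  have hZcard : Z.card ≤ 2 * d := by
    calc Z.card ≤ (X \ Y).card + (Y \ X).card := Finset.card_union_le _ _
    _ ≤ X.card + Y.card := by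
        gcongr <;> exact Finset.sdiff_subset
    _ ≤ 2 * d := by omega
  haveI : CharP F 2 := inferInstanceAs (CharP (GaloisField 2 m) 2)
  have hsplit : ∀ f : Fin n → F, ∑ z ∈ Z, f z = (∑ x ∈ X, f x) + ∑ y ∈ Y, f y := by
    intro f
    have e1 : ∑ z ∈ X \ Y, f z = (∑ x ∈ X, f x) - ∑ x ∈ X ∩ Y, f x := by
      rw [← Finset.sdiff_inter_self_left X Y]
      exact Finset.sum_sdiff_eq_sub Finset.inter_subset_left
    have e2 : ∑ z ∈ Y \ X, f z = (∑ y ∈ Y, f y) - ∑ x ∈ X ∩ Y, f x := by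
      rw [← Finset.sdiff_inter_self_right Y X]
      exact Finset.sum_sdiff_eq_sub Finset.inter_subset_right
    have e3 : (∑ x ∈ X ∩ Y, f x) + (∑ x ∈ X ∩ Y, f x) = 0 :=
      CharTwo.add_self_eq_zero _
    rw [hZ, Finset.sum_union disjoint_sdiff_sdiff, e1, e2]
    linear_combination -e3
  -- power sums over Z
  set psum : ℕ → F := fun s => ∑ z ∈ Z, v z ^ s with hpsum
  have hodd : ∀ k : Fin d, psum (2 * (k : ℕ) + 1) = 0 := by
    intro k
    simp only [hpsum]
    rw [hsplit (fun z => v z ^ (2 * (k : ℕ) + 1))]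
    have hk := hkeq k
    simp only [hw] at hk
    rw [hk]
    exact CharTwo.add_self_eq_zero _
  have heven : ∀ t : ℕ, psum (2 * t) = psum t ^ 2 := by
    intro t
    simp only [hpsum]
    rw [sum_pow_char]
    refine Finset.sum_congr rfl fun z _ => ?_
    rw [← pow_mul, mul_comm]
  have hall : ∀ s : ℕ, 1 ≤ s → s ≤ 2 * d → psum s = 0 := by
    intro s
    induction s using Nat.strong_induction_on with
    | _ s ih =>
      intro hs1 hs2
      rcases Nat.even_or_odd s with ⟨t, ht⟩ | ⟨t, ht⟩
      · have ht' : s = 2 * t := by omega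
        rw [ht', heven, ih t (by omega) (by omega) (by omega), pow_two, mul_zero]
      · have htd : t < d := by omega
        rw [ht]
        simpa using hodd ⟨t, htd⟩
  -- Vandermonde contradiction
  set K := Z.card with hK
  have hK1 : 1 ≤ K := Finset.card_pos.mpr hZne
  set u : Fin K → F := fun j => v ((Z.equivFin.symm j) : Fin n) with hu
  have huinj : Function.Injective u := by
    intro a b hab
    have := hvinj hab
    exact Z.equivFin.symm.injective (Subtype.ext this)
  have hu0 : ∀ j, u j ≠ 0 := fun j => hv0 _
  have husum : ∀ s : ℕ, (∑ j : Fin K, u j ^ s) = psum s := by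
    intro s
    simp only [hpsum]
    rw [← Finset.sum_coe_sort Z (fun z => v z ^ s)]
    exact Fintype.sum_equiv Z.equivFin.symm _ _ (fun j => rfl)
  set M : Matrix (Fin K) (Fin K) F :=
    Matrix.of (fun j s => u j * (Matrix.vandermonde u) j s) with hM
  have hdet : M.det ≠ 0 := by
    rw [hM, Matrix.det_mul_column]
    refine mul_ne_zero (Finset.prod_ne_zero_iff.mpr fun j _ => hu0 j) ?_
    rw [Ne, Matrix.det_vandermonde_eq_zero_iff]
    rintro ⟨i, j, hij, hne'⟩
    exact hne' (huinj hij)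
  have hmv : Mᵀ.mulVec (fun _ => (1 : F)) = 0 := by
    funext s
    have hstep : Mᵀ.mulVec (fun _ => (1 : F)) s = ∑ j : Fin K, u j ^ ((s : ℕ) + 1) := by
      simp only [Matrix.mulVec, dotProduct, Matrix.transpose_apply, hM,
        Matrix.of_apply, Matrix.vandermonde_apply, mul_one]
      refine Finset.sum_congr rfl fun j _ => ?_
      rw [pow_succ]
      ring
    rw [hstep, husum]
    exact hall _ (by omega) (by have := s.2; omega)
  have hzero : (fun _ => (1 : F)) = (0 : Fin K → F) :=
    Matrix.eq_zero_of_mulVec_eq_zero (by rwa [Matrix.det_transpose]) hmv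
  have hone : (1 : F) = 0 := congrFun hzero ⟨0, hK1⟩
  exact one_ne_zero hone
end

section
/- Let V = U ⊕ U' be a direct sum of F₂-vector spaces and B ⊆ U a subset of U such that any two distinct subsets of B of size at most d have distinct sums, and let B' be a linearly independent subset of U'. Then B ∪ B' (viewed inside V) has the property that every vector of V has at most one representation as a sum of at most d distinct elements of B ∪ B'. -/
lemma aux_li_sum {V : Type*} [AddCommGroup V] [Module (ZMod 2) V] [DecidableEq V]
    (B' : Finset V) (hB' : LinearIndependent (ZMod 2) (fun b : B' => (b : V)))
    (S T : Finset V) (hS : S ⊆ B') (hT : T ⊆ B')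
    (h : (∑ v ∈ S, v) = ∑ v ∈ T, v) : S = T := by
  rw [linearIndependent_iff'] at hB'
  have hsum : ∀ (W : Finset V), W ⊆ B' →
      ∑ b ∈ B'.attach, (if (b : V) ∈ W then (1 : ZMod 2) else 0) • (b : V) = ∑ v ∈ W, v := by
    intro W hW
    rw [Finset.sum_attach B' (fun v => (if v ∈ W then (1 : ZMod 2) else 0) • v)]
    have h1 : B'.filter (· ∈ W) = W := by
      rw [Finset.filter_mem_eq_inter, Finset.inter_eq_right.mpr hW]
    simp only [ite_smul, one_smul, zero_smul]
    rw [← Finset.sum_filter, h1]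
  have key := hB' Finset.univ
    (fun b => (if (b : V) ∈ S then 1 else 0) - (if (b : V) ∈ T then 1 else 0)) ?_
  · ext v
    constructor <;> intro hv
    · have := key ⟨v, hS hv⟩ (Finset.mem_univ _)
      simp only [hv, if_true] at this
      by_contra hvT
      simp [hvT] at this
    · have := key ⟨v, hT hv⟩ (Finset.mem_univ _)
      simp only [hv, if_true] at this
      by_contra hvS
      simp [hvS] at this
  · rw [Finset.univ_eq_attach]
    simp only [sub_smul]
    rw [Finset.sum_sub_distrib, hsum S hS, hsum T hT, h, sub_self]

theorem distinct_sums_union_independent {V : Type*} [AddCommGroup V]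
    [Module (ZMod 2) V] [DecidableEq V] (d : ℕ)
    (U U' : Submodule (ZMod 2) V) (hcompl : IsCompl U U')
    (B B' : Finset V) (hBU : (B : Set V) ⊆ U) (hB'U' : (B' : Set V) ⊆ U')
    (hB : ∀ S T : Finset V, S ⊆ B → T ⊆ B →
      S.card ≤ d → T.card ≤ d → (∑ v ∈ S, v) = ∑ v ∈ T, v → S = T)
    (hB' : LinearIndependent (ZMod 2) (fun b : B' => (b : V))) :
    ∀ S T : Finset V, S ⊆ B ∪ B' → T ⊆ B ∪ B' →
      S.card ≤ d → T.card ≤ d → (∑ v ∈ S, v) = ∑ v ∈ T, v → S = T := by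
  intro S T hS hT hSd hTd hsum
  set S1 := S.filter (· ∈ B) with hS1
  set S2 := S.filter (· ∉ B) with hS2
  set T1 := T.filter (· ∈ B) with hT1
  set T2 := T.filter (· ∉ B) with hT2
  have hS1B : S1 ⊆ B := fun v hv => (Finset.mem_filter.mp hv).2
  have hT1B : T1 ⊆ B := fun v hv => (Finset.mem_filter.mp hv).2
  have hS2B' : S2 ⊆ B' := by
    intro v hv
    obtain ⟨hvS, hvB⟩ := Finset.mem_filter.mp hv
    rcases Finset.mem_union.mp (hS hvS) with h | h
    · exact absurd h hvB
    · exact h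
  have hT2B' : T2 ⊆ B' := by
    intro v hv
    obtain ⟨hvT, hvB⟩ := Finset.mem_filter.mp hv
    rcases Finset.mem_union.mp (hT hvT) with h | h
    · exact absurd h hvB
    · exact h
  have hsplitS : (∑ v ∈ S, v) = (∑ v ∈ S1, v) + ∑ v ∈ S2, v :=
    (Finset.sum_filter_add_sum_filter_not S (· ∈ B) id).symm
  have hsplitT : (∑ v ∈ T, v) = (∑ v ∈ T1, v) + ∑ v ∈ T2, v :=
    (Finset.sum_filter_add_sum_filter_not T (· ∈ B) id).symm
  have haU : (∑ v ∈ S1, v) ∈ U := Submodule.sum_mem U (fun v hv => hBU (hS1B hv))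
  have ha'U : (∑ v ∈ T1, v) ∈ U := Submodule.sum_mem U (fun v hv => hBU (hT1B hv))
  have hbU' : (∑ v ∈ S2, v) ∈ U' := Submodule.sum_mem U' (fun v hv => hB'U' (hS2B' hv))
  have hb'U' : (∑ v ∈ T2, v) ∈ U' := Submodule.sum_mem U' (fun v hv => hB'U' (hT2B' hv))
  have heq : (∑ v ∈ S1, v) + ∑ v ∈ S2, v = (∑ v ∈ T1, v) + ∑ v ∈ T2, v := by
    rw [← hsplitS, ← hsplitT]; exact hsum
  have hdiff : (∑ v ∈ S1, v) - (∑ v ∈ T1, v) = (∑ v ∈ T2, v) - (∑ v ∈ S2, v) := by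
    rw [sub_eq_sub_iff_add_eq_add, heq, add_comm]
  have hmem : (∑ v ∈ S1, v) - (∑ v ∈ T1, v) = 0 := by
    apply Submodule.disjoint_def.mp hcompl.disjoint
    · exact Submodule.sub_mem U haU ha'U
    · rw [hdiff]; exact Submodule.sub_mem U' hb'U' hbU'
  have h1 : (∑ v ∈ S1, v) = ∑ v ∈ T1, v := sub_eq_zero.mp hmem
  have h2 : (∑ v ∈ S2, v) = ∑ v ∈ T2, v := by
    have := hdiff; rw [hmem] at this
    have := (sub_eq_zero.mp this.symm)
    exact this.symm
  have e1 : S1 = T1 := hB S1 T1 hS1B hT1B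
    (le_trans (Finset.card_filter_le _ _) hSd) (le_trans (Finset.card_filter_le _ _) hTd) h1
  have e2 : S2 = T2 := aux_li_sum B' hB' S2 T2 hS2B' hT2B' h2
  have : S1 ∪ S2 = T1 ∪ T2 := by rw [e1, e2]
  rwa [Finset.filter_union_filter_not_eq, Finset.filter_union_filter_not_eq] at this
end
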